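/- arXiv:hep-th/9809149 — 2 statements merged into one kernel-verified Lean document; each statement's English description precedes it below -/
import Mathlib

section
/- Let z₁,…,z_M : ℝ^{1+n} → ℂ be C² maps satisfying □₂ z_i = 0 and ∂^μ z_i ∂_μ z_j = 0 for all i,j, and let f : ℂ^M → ℂ be a C² function of (z₁,…,z_M, z̄₁,…,z̄_M). Then the currents J_μ = Σ_{j=1}^M ( (∂f/∂z_j) ∂_μ z_j − (∂f/∂z̄_j) ∂_μ z̄_j ) satisfy ∂^μ J_μ = 0. -/
/-- Partial derivative in the μ-th coordinate direction. -/
noncomputable def pd {n : ℕ} (μ : Fin (n+1)) (u : (Fin (n+1) → ℝ) → ℂ) :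
    (Fin (n+1) → ℝ) → ℂ :=
  fun x => fderiv ℝ u x (Pi.single μ 1)

/-- The d'Alembertian □₂ = ∂₀² − Σⱼ ∂ⱼ² on ℝ^{1+n}. -/
noncomputable def box2 {n : ℕ} (u : (Fin (n+1) → ℝ) → ℂ) :
    (Fin (n+1) → ℝ) → ℂ :=
  fun x => pd 0 (pd 0 u) x - ∑ j : Fin n, pd j.succ (pd j.succ u) x

/-- Wirtinger derivative ∂/∂z_k of a function F : ℂ^M → ℂ (viewed as a real-smooth map). -/
noncomputable def wD {M : ℕ} (k : Fin M) (F : (Fin M → ℂ) → ℂ) : (Fin M → ℂ) → ℂ :=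
  fun Z => (fderiv ℝ F Z (Pi.single k 1) - Complex.I * fderiv ℝ F Z (Pi.single k Complex.I)) / 2

/-- Wirtinger derivative ∂/∂z̄_k of a function F : ℂ^M → ℂ. -/
noncomputable def wDbar {M : ℕ} (k : Fin M) (F : (Fin M → ℂ) → ℂ) : (Fin M → ℂ) → ℂ :=
  fun Z => (fderiv ℝ F Z (Pi.single k 1) + Complex.I * fderiv ℝ F Z (Pi.single k Complex.I)) / 2

/-!
By the Leibniz rule and the Wirtinger chain rule
`∂_μ (g ∘ z) = Σ_k (∂_k g) ∂_μ z_k + (∂_k̄ g) ∂_μ z̄_k`, the divergence of `J` is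
`Σ_j (f_j □z_j − f_j̄ □z̄_j) + Σ_{j,k} (f_{jk} ⟨∂z_k, ∂z_j⟩ + f_{jk̄} ⟨∂z̄_k, ∂z_j⟩
  − f_{j̄k} ⟨∂z_k, ∂z̄_j⟩ − f_{j̄k̄} ⟨∂z̄_k, ∂z̄_j⟩)`,
with `⟨·,·⟩` the Minkowski pairing. The wave equations remove the first sum and the null
conditions (with their complex conjugates) the unmixed terms. The two mixed sums agree after
exchanging `j` and `k`, because mixed Wirtinger derivatives of a `C²` function commute and
`⟨·,·⟩` is symmetric.
-/

open Complex ComplexConjugate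

lemma ContinuousLinearMap.apply_eq_wirtinger (ℓ : ℂ →L[ℝ] ℂ) (w : ℂ) :
    ℓ w = (ℓ 1 - I * ℓ I) / 2 * w + (ℓ 1 + I * ℓ I) / 2 * conj w := by
  have hℓ : ℓ w = w.re * ℓ 1 + w.im * ℓ I := by
    have hw : w = w.re • (1 : ℂ) + w.im • I := by simp [real_smul, re_add_im]
    rw [hw, map_add, map_smul, map_smul]
    simp [real_smul]
  rw [hℓ]
  conv_rhs => rw [← re_add_im w, map_add, map_mul, conj_ofReal, conj_ofReal, conj_I]
  linear_combination (ℓ I * w.im) * I_mul_I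

lemma hasFDerivAt_fderiv_apply {𝕜 E G : Type*} [NontriviallyNormedField 𝕜]
    [NormedAddCommGroup E] [NormedSpace 𝕜 E] [NormedAddCommGroup G] [NormedSpace 𝕜 G]
    {F : E → G} (hF : ContDiff 𝕜 2 F) (v x : E) :
    HasFDerivAt (fun y => fderiv 𝕜 F y v) ((fderiv 𝕜 (fderiv 𝕜 F) x).flip v) x := by
  have hF' := (hF.fderiv_right (m := 1) (by norm_num)).differentiable one_ne_zero x
  simpa using hF'.hasFDerivAt.clm_apply (hasFDerivAt_const v x)

lemma hasFDerivAt_wirtinger_combination {E : Type*} [NormedAddCommGroup E] [NormedSpace ℝ E]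
    {F : E → ℂ} (hF : ContDiff ℝ 2 F) (c : ℂ) (a b x : E) :
    HasFDerivAt (fun y => (2⁻¹ : ℂ) * (fderiv ℝ F y a + c * fderiv ℝ F y b))
      ((2⁻¹ : ℂ) • ((fderiv ℝ (fderiv ℝ F) x).flip a + c • (fderiv ℝ (fderiv ℝ F) x).flip b)) x :=
  ((hasFDerivAt_fderiv_apply hF a x).add
    ((hasFDerivAt_fderiv_apply hF b x).const_mul c)).const_mul (2⁻¹ : ℂ)

section Wirtinger
variable {M : ℕ}

lemma ContinuousLinearMap.apply_eq_sum_wirtinger (L : (Fin M → ℂ) →L[ℝ] ℂ) (w : Fin M → ℂ) :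
    L w = ∑ k, ((L (Pi.single k 1) - I * L (Pi.single k I)) / 2 * w k
      + (L (Pi.single k 1) + I * L (Pi.single k I)) / 2 * conj (w k)) := by
  conv_lhs => rw [← Finset.univ_sum_single w, map_sum]
  refine Finset.sum_congr rfl fun k _ => ?_
  exact (L.comp (ContinuousLinearMap.single ℝ (fun _ => ℂ) k)).apply_eq_wirtinger (w k)

lemma fderiv_comp_eq_sum_wirtinger {E : Type*} [NormedAddCommGroup E] [NormedSpace ℝ E]
    {z : Fin M → E → ℂ} {x : E} (hz : ∀ i, DifferentiableAt ℝ (z i) x)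
    {g : (Fin M → ℂ) → ℂ} (hg : DifferentiableAt ℝ g (fun i => z i x)) (v : E) :
    fderiv ℝ (fun y => g (fun i => z i y)) x v
      = ∑ k, (wD k g (fun i => z i x) * fderiv ℝ (z k) x v
          + wDbar k g (fun i => z i x) * conj (fderiv ℝ (z k) x v)) := by
  rw [show (fun y => g (fun i => z i y)) = g ∘ fun y i => z i y from rfl,
    fderiv_comp x hg (differentiableAt_pi.2 hz), ContinuousLinearMap.comp_apply, fderiv_pi hz]
  exact (fderiv ℝ g _).apply_eq_sum_wirtinger _

variable {F : (Fin M → ℂ) → ℂ}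

lemma wD_eq_combination (k : Fin M) :
    wD k F = fun Z =>
      (2⁻¹ : ℂ) * (fderiv ℝ F Z (Pi.single k 1) + -I * fderiv ℝ F Z (Pi.single k I)) := by
  funext Z; simp only [wD]; ring

lemma wDbar_eq_combination (k : Fin M) :
    wDbar k F = fun Z =>
      (2⁻¹ : ℂ) * (fderiv ℝ F Z (Pi.single k 1) + I * fderiv ℝ F Z (Pi.single k I)) := by
  funext Z; simp only [wDbar]; ring

lemma differentiable_wD (hF : ContDiff ℝ 2 F) (k : Fin M) : Differentiable ℝ (wD k F) := by
  rw [wD_eq_combination]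
  exact fun Z => (hasFDerivAt_wirtinger_combination hF _ _ _ Z).differentiableAt

lemma differentiable_wDbar (hF : ContDiff ℝ 2 F) (k : Fin M) : Differentiable ℝ (wDbar k F) := by
  rw [wDbar_eq_combination]
  exact fun Z => (hasFDerivAt_wirtinger_combination hF _ _ _ Z).differentiableAt

lemma fderiv_wD_apply (hF : ContDiff ℝ 2 F) (k : Fin M) (Z v : Fin M → ℂ) :
    fderiv ℝ (wD k F) Z v = (fderiv ℝ (fderiv ℝ F) Z v (Pi.single k 1)
      - I * fderiv ℝ (fderiv ℝ F) Z v (Pi.single k I)) / 2 := by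
  rw [wD_eq_combination, (hasFDerivAt_wirtinger_combination hF _ _ _ Z).fderiv]
  simp only [smul_apply, add_apply, ContinuousLinearMap.flip_apply, smul_eq_mul]
  ring

lemma fderiv_wDbar_apply (hF : ContDiff ℝ 2 F) (k : Fin M) (Z v : Fin M → ℂ) :
    fderiv ℝ (wDbar k F) Z v = (fderiv ℝ (fderiv ℝ F) Z v (Pi.single k 1)
      + I * fderiv ℝ (fderiv ℝ F) Z v (Pi.single k I)) / 2 := by
  rw [wDbar_eq_combination, (hasFDerivAt_wirtinger_combination hF _ _ _ Z).fderiv]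
  simp only [smul_apply, add_apply, ContinuousLinearMap.flip_apply, smul_eq_mul]
  ring

lemma wDbar_wD_comm (hF : ContDiff ℝ 2 F) (j k : Fin M) (Z : Fin M → ℂ) :
    wDbar k (wD j F) Z = wD j (wDbar k F) Z := by
  have hsymm := (hF.contDiffAt (x := Z)).isSymmSndFDerivAt (by simp)
  simp only [wDbar, wD, fderiv_wD_apply hF, fderiv_wDbar_apply hF]
  rw [hsymm (Pi.single j 1) (Pi.single k 1), hsymm (Pi.single j 1) (Pi.single k I),
    hsymm (Pi.single j I) (Pi.single k 1), hsymm (Pi.single j I) (Pi.single k I)]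
  ring

end Wirtinger

section Minkowski
variable {n : ℕ}

variable (n) in
noncomputable def minkowski : LinearMap.BilinForm ℂ (Fin (n+1) → ℂ) :=
  LinearMap.mk₂ ℂ (fun a b => a 0 * b 0 - ∑ l : Fin n, a l.succ * b l.succ)
    (fun a a' b => by simp only [Pi.add_apply, add_mul, Finset.sum_add_distrib]; ring)
    (fun c a b => by simp only [Pi.smul_apply, smul_eq_mul, mul_assoc, ← Finset.mul_sum]; ring)
    (fun a b b' => by simp only [Pi.add_apply, mul_add, Finset.sum_add_distrib]; ring)
    (fun c a b => by simp only [Pi.smul_apply, smul_eq_mul, mul_left_comm, ← Finset.mul_sum]; ring)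

lemma minkowski_apply (a b : Fin (n+1) → ℂ) :
    minkowski n a b = a 0 * b 0 - ∑ l : Fin n, a l.succ * b l.succ := rfl

lemma minkowski_comm (a b : Fin (n+1) → ℂ) : minkowski n a b = minkowski n b a := by
  simp only [minkowski_apply, mul_comm]

lemma minkowski_star (a b : Fin (n+1) → ℂ) :
    minkowski n (star a) (star b) = conj (minkowski n a b) := by
  simp [minkowski_apply]

lemma minkowski_sum_wirtinger_left {M : ℕ} {P : Fin M → Fin (n+1) → ℂ}
    (hnull : ∀ i j, minkowski n (P i) (P j) = 0) (α β : Fin M → ℂ) (j : Fin M) :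
    minkowski n (∑ k, (α k • P k + β k • star (P k))) (P j)
      = ∑ k, β k * minkowski n (star (P k)) (P j) := by
  simp [hnull]

lemma minkowski_sum_wirtinger_left_star {M : ℕ} {P : Fin M → Fin (n+1) → ℂ}
    (hnull : ∀ i j, minkowski n (P i) (P j) = 0) (α β : Fin M → ℂ) (j : Fin M) :
    minkowski n (∑ k, (α k • P k + β k • star (P k))) (star (P j))
      = ∑ k, α k * minkowski n (P k) (star (P j)) := by
  simp [minkowski_star, hnull]

end Minkowski

section Divergence
variable {n : ℕ} {x : Fin (n+1) → ℝ}

noncomputable def partials (u : (Fin (n+1) → ℝ) → ℂ) (x : Fin (n+1) → ℝ) : Fin (n+1) → ℂ :=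
  fun μ => pd μ u x

noncomputable def minkowskiDiv (V : Fin (n+1) → (Fin (n+1) → ℝ) → ℂ) (x : Fin (n+1) → ℝ) : ℂ :=
  pd 0 (V 0) x - ∑ l : Fin n, pd l.succ (V l.succ) x

lemma differentiable_pd {u : (Fin (n+1) → ℝ) → ℂ} (hu : ContDiff ℝ 2 u) (μ : Fin (n+1)) :
    Differentiable ℝ (pd μ u) :=
  fun x => (hasFDerivAt_fderiv_apply hu _ x).differentiableAt

lemma pd_conj (μ : Fin (n+1)) (u : (Fin (n+1) → ℝ) → ℂ) :
    pd μ (fun y => conj (u y)) = fun y => conj (pd μ u y) := by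
  funext y
  change fderiv ℝ (fun y => star (u y)) y _ = star (fderiv ℝ u y _)
  rw [fderiv_star]
  rfl

lemma partials_conj (u : (Fin (n+1) → ℝ) → ℂ) (x : Fin (n+1) → ℝ) :
    partials (fun y => conj (u y)) x = star (partials u x) := by
  funext μ
  simp [partials, pd_conj]

lemma box2_conj (u : (Fin (n+1) → ℝ) → ℂ) (x : Fin (n+1) → ℝ) :
    box2 (fun y => conj (u y)) x = conj (box2 u x) := by
  simp [box2, pd_conj]

lemma partials_comp_eq_sum_wirtinger {M : ℕ} {z : Fin M → (Fin (n+1) → ℝ) → ℂ}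
    (hz : ∀ i, DifferentiableAt ℝ (z i) x)
    {g : (Fin M → ℂ) → ℂ} (hg : DifferentiableAt ℝ g (fun i => z i x)) :
    partials (fun y => g (fun i => z i y)) x
      = ∑ k, (wD k g (fun i => z i x) • partials (z k) x
          + wDbar k g (fun i => z i x) • star (partials (z k) x)) := by
  funext μ
  simp [partials, pd, fderiv_comp_eq_sum_wirtinger hz hg]

lemma minkowskiDiv_sum {ι : Type*} (s : Finset ι) {V : ι → Fin (n+1) → (Fin (n+1) → ℝ) → ℂ}
    (hV : ∀ i ∈ s, ∀ μ, DifferentiableAt ℝ (V i μ) x) :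
    minkowskiDiv (fun μ y => ∑ i ∈ s, V i μ y) x = ∑ i ∈ s, minkowskiDiv (V i) x := by
  have hpd : ∀ μ, pd μ (fun y => ∑ i ∈ s, V i μ y) x = ∑ i ∈ s, pd μ (V i μ) x := fun μ => by
    simp [pd, fderiv_fun_sum fun i hi => hV i hi μ]
  simp only [minkowskiDiv, hpd, Finset.sum_sub_distrib]
  rw [Finset.sum_comm]

lemma minkowskiDiv_sub {V W : Fin (n+1) → (Fin (n+1) → ℝ) → ℂ}
    (hV : ∀ μ, DifferentiableAt ℝ (V μ) x) (hW : ∀ μ, DifferentiableAt ℝ (W μ) x) :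
    minkowskiDiv (fun μ y => V μ y - W μ y) x = minkowskiDiv V x - minkowskiDiv W x := by
  have hpd : ∀ μ, pd μ (fun y => V μ y - W μ y) x = pd μ (V μ) x - pd μ (W μ) x := fun μ => by
    simp [pd, fderiv_fun_sub (hV μ) (hW μ)]
  simp only [minkowskiDiv, hpd, Finset.sum_sub_distrib]
  ring

lemma minkowskiDiv_mul {u : (Fin (n+1) → ℝ) → ℂ} {V : Fin (n+1) → (Fin (n+1) → ℝ) → ℂ}
    (hu : DifferentiableAt ℝ u x) (hV : ∀ μ, DifferentiableAt ℝ (V μ) x) :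
    minkowskiDiv (fun μ y => u y * V μ y) x
      = minkowski n (partials u x) (fun μ => V μ x) + u x * minkowskiDiv V x := by
  have hpd : ∀ μ, pd μ (fun y => u y * V μ y) x = pd μ u x * V μ x + u x * pd μ (V μ) x :=
    fun μ => by simp [pd, fderiv_fun_mul hu (hV μ)]; ring
  simp only [minkowskiDiv, minkowski_apply, partials, hpd, Finset.sum_add_distrib]
  rw [← Finset.mul_sum]
  ring

lemma minkowskiDiv_partials (u : (Fin (n+1) → ℝ) → ℂ) :
    minkowskiDiv (fun μ => pd μ u) x = box2 u x := rfl

lemma minkowskiDiv_current {M : ℕ} {z : Fin M → (Fin (n+1) → ℝ) → ℂ}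
    (hz : ∀ i, ContDiff ℝ 2 (z i)) {F G : Fin M → (Fin (n+1) → ℝ) → ℂ}
    (hF : ∀ j, DifferentiableAt ℝ (F j) x) (hG : ∀ j, DifferentiableAt ℝ (G j) x) :
    minkowskiDiv (fun μ y => ∑ j, (F j y * pd μ (z j) y
        - G j y * pd μ (fun y => conj (z j y)) y)) x
      = ∑ j, (minkowski n (partials (F j) x) (partials (z j) x) + F j x * box2 (z j) x
        - (minkowski n (partials (G j) x) (star (partials (z j) x))
          + G j x * conj (box2 (z j) x))) := by
  have hpd : ∀ j μ, DifferentiableAt ℝ (pd μ (z j)) x := fun j μ => differentiable_pd (hz j) μ x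
  have hpd_conj : ∀ j μ, DifferentiableAt ℝ (pd μ (fun y => conj (z j y))) x := fun j μ => by
    rw [pd_conj]
    exact (hpd j μ).star
  rw [minkowskiDiv_sum (V := fun j μ y => F j y * pd μ (z j) y
      - G j y * pd μ (fun y => conj (z j y)) y) _ fun j _ μ =>
    ((hF j).mul (hpd j μ)).sub ((hG j).mul (hpd_conj j μ))]
  refine Finset.sum_congr rfl fun j _ => ?_
  rw [minkowskiDiv_sub (V := fun μ y => F j y * pd μ (z j) y)
      (W := fun μ y => G j y * pd μ (fun y => conj (z j y)) y)
      (fun μ => (hF j).mul (hpd j μ)) (fun μ => (hG j).mul (hpd_conj j μ)),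
    minkowskiDiv_mul (hF j) (hpd j), minkowskiDiv_mul (hG j) (hpd_conj j),
    minkowskiDiv_partials, minkowskiDiv_partials, box2_conj, ← partials_conj]
  rfl

end Divergence

theorem stmt3 {n M : ℕ} (z : Fin M → (Fin (n+1) → ℝ) → ℂ)
    (hz : ∀ i, ContDiff ℝ 2 (z i))
    (hwave : ∀ i x, box2 (z i) x = 0)
    (hnull : ∀ i j x,
      pd 0 (z i) x * pd 0 (z j) x
        - ∑ l : Fin n, pd l.succ (z i) x * pd l.succ (z j) x = 0)
    (f : (Fin M → ℂ) → ℂ) (hf : ContDiff ℝ 2 f)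
    (J : Fin (n+1) → (Fin (n+1) → ℝ) → ℂ)
    (hJ : J = fun μ x => ∑ j : Fin M,
      (wD j f (fun i => z i x) * pd μ (z j) x
        - wDbar j f (fun i => z i x) * pd μ (fun y => starRingEnd ℂ (z j y)) x)) :
    ∀ x, pd 0 (J 0) x - ∑ l : Fin n, pd l.succ (J l.succ) x = 0 := by
  intro x
  change minkowskiDiv J x = 0
  subst hJ
  have hzx : ∀ i, DifferentiableAt ℝ (z i) x := fun i => (hz i).differentiable two_ne_zero x
  have hZ : DifferentiableAt ℝ (fun y i => z i y) x := differentiableAt_pi.2 hzx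
  have hnullx : ∀ i j, minkowski n (partials (z i) x) (partials (z j) x) = 0 :=
    fun i j => hnull i j x
  rw [minkowskiDiv_current (F := fun j y => wD j f (fun i => z i y))
    (G := fun j y => wDbar j f (fun i => z i y)) hz
    (fun j => (differentiable_wD hf j _).comp x hZ)
    (fun j => (differentiable_wDbar hf j _).comp x hZ)]
  simp only [partials_comp_eq_sum_wirtinger hzx (differentiable_wD hf _ _),
    partials_comp_eq_sum_wirtinger hzx (differentiable_wDbar hf _ _),
    minkowski_sum_wirtinger_left hnullx, minkowski_sum_wirtinger_left_star hnullx,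
    hwave, map_zero, mul_zero, add_zero]
  rw [Finset.sum_sub_distrib, sub_eq_zero, Finset.sum_comm]
  refine Finset.sum_congr rfl fun j _ => Finset.sum_congr rfl fun k _ => ?_
  rw [wDbar_wD_comm hf, minkowski_comm]
end

section
/- Let a₀,…,a_n, b : ℂ → ℂ be holomorphic with a₀(w)² − Σ_{j=1}^n a_j(w)² = 0 for all w, and let u : Ω → ℂ be a C² function implicitly defined by Σ_{μ=0}^n a_μ(u)x_μ − b(u) = 0 with δ' = Σ_μ a_μ'(u)x_μ − b'(u) nonvanishing. Then u satisfies both □₂u = 0 and ∂^μu ∂_μu = 0, i.e., u is a solution of the CP¹-submodel. -/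
/-! Differentiating the implicit equation `Σ a_μ(u) x_μ − b(u) = 0` along `x_ν` gives
`δ' ∂_ν u = −a_ν(u)`, so `δ'² ∂^μu ∂_μu = a(u)·a(u) = 0`. Differentiating once more gives
`δ' ∂_ν²u + δ'' (∂_ν u)² + 2 a_ν'(u) ∂_ν u = 0`. Contracting with the Minkowski metric, the middle
term vanishes by the first equation and the last one because `a·a' = ½ (a·a)' = 0`; as `δ' ≠ 0`,
this gives `□₂ u = 0`. The algebra only uses linearity of the contraction. -/

open Filter Topology

section PartialDerivative

variable {n : ℕ} {μ : Fin (n+1)} {f g u : (Fin (n+1) → ℝ) → ℂ} {x : Fin (n+1) → ℝ}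

lemma pd_eq_zero_of_eventuallyEq_zero (h : f =ᶠ[𝓝 x] 0) : pd μ f x = 0 := by
  simp [pd, h.fderiv_eq]

lemma pd_add (hf : DifferentiableAt ℝ f x) (hg : DifferentiableAt ℝ g x) :
    pd μ (fun y => f y + g y) x = pd μ f x + pd μ g x := by
  simp [pd, fderiv_fun_add hf hg]

lemma pd_sub (hf : DifferentiableAt ℝ f x) (hg : DifferentiableAt ℝ g x) :
    pd μ (fun y => f y - g y) x = pd μ f x - pd μ g x := by
  simp [pd, fderiv_fun_sub hf hg]

lemma pd_mul (hf : DifferentiableAt ℝ f x) (hg : DifferentiableAt ℝ g x) :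
    pd μ (fun y => f y * g y) x = pd μ f x * g x + f x * pd μ g x := by
  simp [pd, fderiv_fun_mul hf hg]
  ring

lemma pd_sum {ι : Type*} (s : Finset ι) {F : ι → (Fin (n+1) → ℝ) → ℂ}
    (hF : ∀ i ∈ s, DifferentiableAt ℝ (F i) x) :
    pd μ (fun y => ∑ i ∈ s, F i y) x = ∑ i ∈ s, pd μ (F i) x := by
  simp [pd, fderiv_fun_sum hF]

lemma pd_coord (ν : Fin (n+1)) :
    pd μ (fun y => (y ν : ℂ)) x = if ν = μ then 1 else 0 := by
  have : HasFDerivAt (fun y : Fin (n+1) → ℝ => (y ν : ℂ))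
      (Complex.ofRealCLM.comp (ContinuousLinearMap.proj ν)) x :=
    (Complex.ofRealCLM.comp
      (ContinuousLinearMap.proj (R := ℝ) (φ := fun _ : Fin (n+1) => ℝ) ν)).hasFDerivAt
  simp [pd, this.fderiv, Pi.single_apply, apply_ite]

lemma differentiableAt_coord (ν : Fin (n+1)) :
    DifferentiableAt ℝ (fun y : Fin (n+1) → ℝ => (y ν : ℂ)) x := by
  fun_prop

lemma pd_comp {h : ℂ → ℂ} (hh : DifferentiableAt ℂ h (u x)) (hu : DifferentiableAt ℝ u x) :
    pd μ (fun y => h (u y)) x = deriv h (u x) * pd μ u x := by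
  have : HasFDerivAt (fun y => h (u y)) (deriv h (u x) • fderiv ℝ u x) x :=
    hh.hasDerivAt.comp_hasFDerivAt x hu.hasFDerivAt
  simp [pd, this.fderiv]

lemma DifferentiableAt.holomorphic_comp {h : ℂ → ℂ} (hh : DifferentiableAt ℂ h (u x))
    (hu : DifferentiableAt ℝ u x) : DifferentiableAt ℝ (fun y => h (u y)) x :=
  (hh.restrictScalars ℝ).comp x hu

lemma ContDiffOn.differentiableAt_pd {Ω : Set (Fin (n+1) → ℝ)} (hu : ContDiffOn ℝ 2 u Ω)
    (hΩ : IsOpen Ω) (hx : x ∈ Ω) : DifferentiableAt ℝ (pd μ u) x :=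
  (ContinuousLinearMap.apply ℝ ℂ (Pi.single μ 1 : Fin (n+1) → ℝ)).differentiableAt.comp x
    (((hu.fderiv_of_isOpen hΩ (by norm_num)).differentiableOn one_ne_zero).differentiableAt
      (hΩ.mem_nhds hx))

end PartialDerivative

section ImplicitEquation

variable {n : ℕ} {u : (Fin (n+1) → ℝ) → ℂ} {x : Fin (n+1) → ℝ}

/-- With `c = a`, `d = b` this is the left side of the implicit equation; with `c = a'`, `d = b'`
it is `δ'`, and with second derivatives it is `δ''`. -/
def implicitResidual (c : Fin (n+1) → ℂ → ℂ) (d : ℂ → ℂ) (u : (Fin (n+1) → ℝ) → ℂ)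
    (x : Fin (n+1) → ℝ) : ℂ :=
  ∑ μ, c μ (u x) * x μ - d (u x)

variable {c : Fin (n+1) → ℂ → ℂ} {d : ℂ → ℂ}

lemma differentiableAt_implicitResidual (hc : ∀ μ, DifferentiableAt ℂ (c μ) (u x))
    (hd : DifferentiableAt ℂ d (u x)) (hu : DifferentiableAt ℝ u x) :
    DifferentiableAt ℝ (implicitResidual c d u) x := by
  unfold implicitResidual
  have := fun μ => (hc μ).holomorphic_comp hu
  have := hd.holomorphic_comp hu
  fun_prop

lemma pd_implicitResidual (ν : Fin (n+1)) (hc : ∀ μ, DifferentiableAt ℂ (c μ) (u x))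
    (hd : DifferentiableAt ℂ d (u x)) (hu : DifferentiableAt ℝ u x) :
    pd ν (implicitResidual c d u) x =
      implicitResidual (fun μ => deriv (c μ)) (deriv d) u x * pd ν u x + c ν (u x) := by
  have hterm : ∀ μ, DifferentiableAt ℝ (fun y => c μ (u y) * (y μ : ℂ)) x := fun μ =>
    ((hc μ).holomorphic_comp hu).mul (differentiableAt_coord μ)
  unfold implicitResidual
  rw [pd_sub (DifferentiableAt.fun_sum fun μ _ => hterm μ)
    (hd.holomorphic_comp hu), pd_sum _ fun μ _ => hterm μ, pd_comp hd hu]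
  simp only [pd_mul ((hc _).holomorphic_comp hu) (differentiableAt_coord _), pd_comp (hc _) hu,
    pd_coord, mul_ite, mul_one, mul_zero, Finset.sum_add_distrib, Finset.sum_ite_eq',
    Finset.mem_univ, if_true]
  rw [sub_mul, Finset.sum_mul]
  simp only [mul_right_comm]
  ring

lemma implicitResidual_deriv_mul_pd_add_eq_zero (ν : Fin (n+1))
    (hzero : implicitResidual c d u =ᶠ[𝓝 x] 0) (hc : ∀ μ, DifferentiableAt ℂ (c μ) (u x))
    (hd : DifferentiableAt ℂ d (u x)) (hu : DifferentiableAt ℝ u x) :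
    implicitResidual (fun μ => deriv (c μ)) (deriv d) u x * pd ν u x + c ν (u x) = 0 := by
  rw [← pd_implicitResidual ν hc hd hu]
  exact pd_eq_zero_of_eventuallyEq_zero hzero

lemma implicitResidual_deriv_mul_pd_pd_add_eq_zero (ν : Fin (n+1))
    (hzero : implicitResidual c d u =ᶠ[𝓝 x] 0) (hc : ∀ μ, Differentiable ℂ (c μ))
    (hd : Differentiable ℂ d) (hu : ∀ᶠ y in 𝓝 x, DifferentiableAt ℝ u y)
    (hpd : DifferentiableAt ℝ (pd ν u) x) :
    implicitResidual (fun μ => deriv (c μ)) (deriv d) u x * pd ν (pd ν u) x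
      + implicitResidual (fun μ => deriv (deriv (c μ))) (deriv (deriv d)) u x * pd ν u x ^ 2
      + 2 * deriv (c ν) (u x) * pd ν u x = 0 := by
  have hfirst : (fun y => implicitResidual (fun μ => deriv (c μ)) (deriv d) u y * pd ν u y
      + c ν (u y)) =ᶠ[𝓝 x] 0 := by
    filter_upwards [hzero.eventuallyEq_nhds, hu] with y hzero_y hu_y
    exact implicitResidual_deriv_mul_pd_add_eq_zero ν hzero_y (fun μ => hc μ _) (hd _) hu_y
  have hux := hu.self_of_nhds
  have hδ := differentiableAt_implicitResidual (fun μ => (hc μ).deriv (u x)) (hd.deriv (u x)) hux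
  have hpd_zero := pd_eq_zero_of_eventuallyEq_zero (μ := ν) hfirst
  rw [pd_add (hδ.fun_mul hpd) ((hc ν).differentiableAt.holomorphic_comp hux), pd_mul hδ hpd,
    pd_implicitResidual ν (fun μ => (hc μ).deriv (u x)) (hd.deriv (u x)) hux,
    pd_comp (hc ν).differentiableAt hux] at hpd_zero
  linear_combination hpd_zero

end ImplicitEquation

section NullCone

variable {ι : Type*} (T : (ι → ℂ) →ₗ[ℂ] ℂ)

lemma map_sq_eq_zero_of_mul_add_eq_zero {δ : ℂ} (hδ : δ ≠ 0) {p A : ι → ℂ}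
    (h : ∀ ν, δ * p ν + A ν = 0) (hA : T (fun ν => A ν ^ 2) = 0) :
    T (fun ν => p ν ^ 2) = 0 := by
  have hp : (fun ν => p ν ^ 2) = (δ ^ 2)⁻¹ • fun ν => A ν ^ 2 := by
    ext ν
    rw [Pi.smul_apply, smul_eq_mul, eq_neg_of_add_eq_zero_right (h ν)]
    field_simp
  rw [hp, map_smul, hA, smul_zero]

lemma map_eq_zero_of_mul_add_mul_sq_add_eq_zero {δ δ₂ : ℂ} (hδ : δ ≠ 0) {p q A A' : ι → ℂ}
    (h₁ : ∀ ν, δ * p ν + A ν = 0) (h₂ : ∀ ν, δ * q ν + δ₂ * p ν ^ 2 + 2 * A' ν * p ν = 0)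
    (hp : T (fun ν => p ν ^ 2) = 0) (hAA' : T (fun ν => A ν * A' ν) = 0) : T q = 0 := by
  have hq : q = (-δ₂ / δ) • (fun ν => p ν ^ 2) + (2 / δ ^ 2) • fun ν => A ν * A' ν := by
    ext ν
    rw [Pi.add_apply, Pi.smul_apply, Pi.smul_apply, smul_eq_mul, smul_eq_mul,
      eq_neg_of_add_eq_zero_right (h₁ ν)]
    field_simp
    linear_combination h₂ ν
  rw [hq, map_add, map_smul, map_smul, hp, hAA', smul_zero, smul_zero, add_zero]

lemma map_mul_deriv_eq_zero [Fintype ι] {f : ι → ℂ → ℂ} {w : ℂ}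
    (hf : ∀ ν, DifferentiableAt ℂ (f ν) w) (h : ∀ z, T (fun ν => f ν z ^ 2) = 0) :
    T (fun ν => f ν w * deriv (f ν) w) = 0 := by
  have hderiv : HasDerivAt (fun z => T (fun ν => f ν z ^ 2))
      (T fun ν => (2 : ℕ) * f ν w ^ (2 - 1) * deriv (f ν) w) w :=
    (LinearMap.toContinuousLinearMap T).hasFDerivAt.comp_hasDerivAt w
      (hasDerivAt_pi.2 fun ν => (hf ν).hasDerivAt.pow 2)
  have hzero : HasDerivAt (fun z => T (fun ν => f ν z ^ 2)) 0 w := by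
    simpa only [h] using hasDerivAt_const w (0 : ℂ)
  have htwo : (fun ν => ((2 : ℕ) : ℂ) * f ν w ^ (2 - 1) * deriv (f ν) w) =
      (2 : ℂ) • fun ν => f ν w * deriv (f ν) w := by
    ext ν
    simp only [Pi.smul_apply, smul_eq_mul]
    ring
  have := hderiv.unique hzero
  rwa [htwo, map_smul, smul_eq_zero, or_iff_right two_ne_zero] at this

end NullCone

/-- Contraction with `diag(1, −1, …, −1)`: `∂^μu ∂_μu` and `□₂ u` are its values at `(∂_μ u)²`
and `∂_μ² u`. -/
def minkowskiTrace (n : ℕ) : (Fin (n+1) → ℂ) →ₗ[ℂ] ℂ :=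
  LinearMap.proj 0 - ∑ j : Fin n, LinearMap.proj j.succ

lemma minkowskiTrace_apply {n : ℕ} (v : Fin (n+1) → ℂ) :
    minkowskiTrace n v = v 0 - ∑ j : Fin n, v j.succ := by
  simp [minkowskiTrace]

theorem stmt6 {n : ℕ} (a : Fin (n+1) → ℂ → ℂ) (b : ℂ → ℂ)
    (ha : ∀ μ, Differentiable ℂ (a μ)) (hb : Differentiable ℂ b)
    (hconstraint : ∀ w : ℂ, (a 0 w)^2 - ∑ j : Fin n, (a j.succ w)^2 = 0)
    (Ω : Set (Fin (n+1) → ℝ)) (hΩ : IsOpen Ω)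
    (u : (Fin (n+1) → ℝ) → ℂ) (hu : ContDiffOn ℝ 2 u Ω)
    (himp : ∀ x ∈ Ω, ∑ μ, a μ (u x) * (x μ : ℂ) - b (u x) = 0)
    (hδ' : ∀ x ∈ Ω, ∑ μ, deriv (a μ) (u x) * (x μ : ℂ) - deriv b (u x) ≠ 0) :
    (∀ x ∈ Ω, box2 u x = 0) ∧
      (∀ x ∈ Ω, (pd 0 u x)^2 - ∑ j : Fin n, (pd j.succ u x)^2 = 0) := by
  have hnull : ∀ w, minkowskiTrace n (fun ν => a ν w ^ 2) = 0 := fun w => by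
    rw [minkowskiTrace_apply]; exact hconstraint w
  suffices h : ∀ x ∈ Ω, minkowskiTrace n (fun ν => pd ν (pd ν u) x) = 0 ∧
      minkowskiTrace n (fun ν => pd ν u x ^ 2) = 0 by
    simp only [minkowskiTrace_apply] at h
    exact ⟨fun x hx => (h x hx).1, fun x hx => (h x hx).2⟩
  intro x hx
  have hzero : implicitResidual a b u =ᶠ[𝓝 x] 0 :=
    Filter.eventually_of_mem (hΩ.mem_nhds hx) himp
  have hu_diff : ∀ᶠ y in 𝓝 x, DifferentiableAt ℝ u y :=
    Filter.eventually_of_mem (hΩ.mem_nhds hx) fun y hy =>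
      (hu.differentiableOn (by norm_num)).differentiableAt (hΩ.mem_nhds hy)
  have h₁ := fun ν => implicitResidual_deriv_mul_pd_add_eq_zero ν hzero
    (fun μ => (ha μ).differentiableAt) hb.differentiableAt hu_diff.self_of_nhds
  have h₂ := fun ν => implicitResidual_deriv_mul_pd_pd_add_eq_zero ν hzero ha hb hu_diff
    (hu.differentiableAt_pd hΩ hx)
  have hp := map_sq_eq_zero_of_mul_add_eq_zero _ (hδ' x hx) h₁ (hnull (u x))
  exact ⟨map_eq_zero_of_mul_add_mul_sq_add_eq_zero _ (hδ' x hx) h₁ h₂ hp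
    (map_mul_deriv_eq_zero _ (fun ν => (ha ν).differentiableAt) hnull), hp⟩
end
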